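/- Let x : Fin N → ℝ be canonical with N ≥ 3. Removing the inner vertex j attaining the inner minimum yields a sequence x' on Fin (N-1) (skipping index j) which is again canonical, and HVG(x') equals the graph obtained from HVG(x) by deleting vertex j and adding the edge between the images of j-1 and j+1 (which is already present). -/

import Mathlib

/-- The horizontal visibility graph of a sequence `x : Fin N → ℝ`:
`a < b` are adjacent iff `x k < min (x a) (x b)` for all `a < k < b`. -/
def HVG {N : ℕ} (x : Fin N → ℝ) : SimpleGraph (Fin N) where
  Adj a b := (a < b ∧ ∀ k, a < k → k < b → x k < min (x a) (x b)) ∨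
             (b < a ∧ ∀ k, b < k → k < a → x k < min (x b) (x a))
  symm := ⟨by intro a b h; tauto⟩
  loopless := ⟨by intro a h; rcases h with ⟨h, -⟩ | ⟨h, -⟩ <;> exact lt_irrefl a h⟩

/-- Degree of a vertex in the HVG. -/
noncomputable def hvgDegree {N : ℕ} (x : Fin N → ℝ) (v : Fin N) : ℕ :=
  Nat.card {w : Fin N // (HVG x).Adj v w}

/-- The order embedding of `Fin (N-1)` into `Fin N` skipping the index `j`. -/
def skip {N : ℕ} (j : Fin N) (i : Fin (N - 1)) : Fin N :=
  if (i : ℕ) < (j : ℕ) then ⟨(i : ℕ), by have := i.isLt; have := j.isLt; omega⟩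
  else ⟨(i : ℕ) + 1, by have := i.isLt; have := j.isLt; omega⟩

/-!
The inner minimum `x j` is, by canonicity, strictly below every other value of `x`. A point that
low never blocks horizontal visibility between two other points, so deleting it changes no
adjacency among the remaining vertices, and its two neighbours see each other over it.
-/

lemma skip_val {N : ℕ} (j : Fin N) (i : Fin (N - 1)) :
    ((skip j i : Fin N) : ℕ) = if (i : ℕ) < (j : ℕ) then (i : ℕ) else (i : ℕ) + 1 := by
  unfold skip; split <;> rfl

lemma skip_strictMono {N : ℕ} (j : Fin N) : StrictMono (skip j) := by
  intro a b hab
  rw [Fin.lt_def, skip_val, skip_val]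
  rw [Fin.lt_def] at hab
  split_ifs <;> omega

lemma skip_ne {N : ℕ} (j : Fin N) (i : Fin (N - 1)) : skip j i ≠ j := by
  intro h
  have := skip_val j i
  rw [h] at this
  split_ifs at this <;> omega

lemma range_skip {N : ℕ} (j : Fin N) : Set.range (skip j) = {j}ᶜ := by
  ext k
  refine ⟨by rintro ⟨i, rfl⟩; exact skip_ne j i, fun hk => ?_⟩
  have hkj : (k : ℕ) ≠ j := fun h => hk (Fin.ext h)
  by_cases h : (k : ℕ) < j
  · exact ⟨⟨k, by omega⟩, Fin.ext (by simp [skip_val, h])⟩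
  · exact ⟨⟨k - 1, by omega⟩, Fin.ext (by simp only [skip_val]; split_ifs <;> omega)⟩

lemma skip_zero {N : ℕ} (j : Fin N) (hj : 0 < (j : ℕ)) :
    skip j ⟨0, by omega⟩ = ⟨0, by omega⟩ :=
  Fin.ext (by simp [skip_val, hj])

lemma skip_last {N : ℕ} (j : Fin N) (hj : (j : ℕ) < N - 1) :
    skip j ⟨N - 2, by omega⟩ = ⟨N - 1, by omega⟩ :=
  Fin.ext (by simp only [skip_val]; split_ifs <;> omega)

lemma skip_val_mem_Ioo {N : ℕ} (j : Fin N) (i : Fin (N - 1))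
    (hi0 : 0 < (i : ℕ)) (hiN : (i : ℕ) < N - 1 - 1) :
    0 < ((skip j i : Fin N) : ℕ) ∧ ((skip j i : Fin N) : ℕ) < N - 1 := by
  rw [skip_val]; split_ifs <;> omega

lemma hvg_adj_iff_of_lt {N : ℕ} (x : Fin N → ℝ) {a b : Fin N} (hab : a < b) :
    (HVG x).Adj a b ↔ ∀ k, a < k → k < b → x k < min (x a) (x b) := by
  refine ⟨?_, fun h => Or.inl ⟨hab, h⟩⟩
  rintro (⟨-, h⟩ | ⟨hba, -⟩)
  · exact h
  · exact absurd (hab.trans hba) (lt_irrefl a)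

lemma hvg_comp_adj_iff {M N : ℕ} (x : Fin N → ℝ) {f : Fin M → Fin N} (hf : StrictMono f)
    (hlow : ∀ k ∉ Set.range f, ∀ a, x k < x (f a)) (a b : Fin M) :
    (HVG (x ∘ f)).Adj a b ↔ (HVG x).Adj (f a) (f b) := by
  suffices h : ∀ a b, a < b → ((HVG (x ∘ f)).Adj a b ↔ (HVG x).Adj (f a) (f b)) by
    rcases lt_trichotomy a b with hab | rfl | hba
    · exact h a b hab
    · simp
    · rw [SimpleGraph.adj_comm, h b a hba, SimpleGraph.adj_comm]
  intro a b hab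
  rw [hvg_adj_iff_of_lt _ hab, hvg_adj_iff_of_lt _ (hf hab)]
  refine ⟨fun h k hak hkb => ?_, fun h m ham hmb => h (f m) (hf ham) (hf hmb)⟩
  by_cases hk : k ∈ Set.range f
  · obtain ⟨m, rfl⟩ := hk
    exact h m (hf.lt_iff_lt.mp hak) (hf.lt_iff_lt.mp hkb)
  · exact lt_min (hlow k hk a) (hlow k hk b)

lemma hvg_adj_pred_succ {N : ℕ} (x : Fin N → ℝ) (j : Fin N) (hj0 : 0 < (j : ℕ))
    (hjN : (j : ℕ) + 1 < N)
    (hlow : x j < min (x ⟨(j : ℕ) - 1, by omega⟩) (x ⟨(j : ℕ) + 1, by omega⟩)) :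
    (HVG x).Adj ⟨(j : ℕ) - 1, by omega⟩ ⟨(j : ℕ) + 1, by omega⟩ := by
  rw [hvg_adj_iff_of_lt _ (Fin.lt_def.mpr (by simp only; omega))]
  intro k hk1 hk2
  rw [Fin.lt_def] at hk1 hk2
  obtain rfl : k = j := Fin.ext (by simp only at hk1 hk2; omega)
  exact hlow

lemma lt_of_ne_of_inner_min {N : ℕ} (x : Fin N → ℝ) (j : Fin N) (hj0 : 0 < (j : ℕ))
    (hjN : (j : ℕ) < N - 1)
    (hend : x j < min (x ⟨0, by omega⟩) (x ⟨N - 1, by omega⟩))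
    (hinj : ∀ k : Fin N, 0 < (k : ℕ) → (k : ℕ) < N - 1 → x j = x k → j = k)
    (hjmin : ∀ k : Fin N, 0 < (k : ℕ) → (k : ℕ) < N - 1 → x j ≤ x k)
    (k : Fin N) (hk : k ≠ j) : x j < x k := by
  rcases Nat.eq_zero_or_pos (k : ℕ) with h0 | h0
  · rw [show k = ⟨0, by omega⟩ from Fin.ext h0]
    exact hend.trans_le (min_le_left _ _)
  by_cases hlast : (k : ℕ) = N - 1
  · rw [show k = ⟨N - 1, by omega⟩ from Fin.ext hlast]
    exact hend.trans_le (min_le_right _ _)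
  have hkN : (k : ℕ) < N - 1 := by omega
  exact (hjmin k h0 hkN).lt_of_ne fun h => hk (hinj k h0 hkN h).symm

theorem hvg_decimate_inner_min {N : ℕ} (hN : 3 ≤ N) (x : Fin N → ℝ)
    (hmax : ∀ k : Fin N, 0 < (k : ℕ) → (k : ℕ) < N - 1 →
      x k < min (x ⟨0, by omega⟩) (x ⟨N - 1, by omega⟩))
    (hinj : ∀ k l : Fin N, 0 < (k : ℕ) → (k : ℕ) < N - 1 →
      0 < (l : ℕ) → (l : ℕ) < N - 1 → x k = x l → k = l)
    (j : Fin N) (hj0 : 0 < (j : ℕ)) (hjN : (j : ℕ) < N - 1)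
    (hjmin : ∀ k : Fin N, 0 < (k : ℕ) → (k : ℕ) < N - 1 → x j ≤ x k) :
    -- the decimated sequence is again canonical
    ((∀ k : Fin (N - 1), 0 < (k : ℕ) → (k : ℕ) < N - 1 - 1 →
        x (skip j k) < min (x (skip j ⟨0, by omega⟩)) (x (skip j ⟨N - 2, by omega⟩))) ∧
      (∀ k l : Fin (N - 1), 0 < (k : ℕ) → (k : ℕ) < N - 1 - 1 →
        0 < (l : ℕ) → (l : ℕ) < N - 1 - 1 → x (skip j k) = x (skip j l) → k = l)) ∧
    -- the HVG of the decimated sequence is the induced subgraph of the original HVG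
    (∀ a b : Fin (N - 1),
      (HVG (fun i => x (skip j i))).Adj a b ↔ (HVG x).Adj (skip j a) (skip j b)) ∧
    -- and the edge between the images of j-1 and j+1 is already present in HVG x
    (HVG x).Adj ⟨(j : ℕ) - 1, by omega⟩ ⟨(j : ℕ) + 1, by omega⟩ := by
  have hlt : ∀ k, k ≠ j → x j < x k :=
    lt_of_ne_of_inner_min x j hj0 hjN (hmax j hj0 hjN) (hinj j · hj0 hjN) hjmin
  refine ⟨⟨fun k hk0 hkN => ?_, fun k l hk0 hkN hl0 hlN hkl => ?_⟩,
    hvg_comp_adj_iff x (skip_strictMono j) ?_, hvg_adj_pred_succ x j hj0 (by omega) ?_⟩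
  · rw [skip_zero j hj0, skip_last j hjN]
    exact hmax _ (skip_val_mem_Ioo j k hk0 hkN).1 (skip_val_mem_Ioo j k hk0 hkN).2
  · obtain ⟨hk1, hk2⟩ := skip_val_mem_Ioo j k hk0 hkN
    obtain ⟨hl1, hl2⟩ := skip_val_mem_Ioo j l hl0 hlN
    exact (skip_strictMono j).injective (hinj _ _ hk1 hk2 hl1 hl2 hkl)
  · intro k hk a
    rw [range_skip, Set.mem_compl_iff, not_not, Set.mem_singleton_iff] at hk
    exact hk ▸ hlt _ (skip_ne j a)
  · exact lt_min (hlt _ (fun h => by simp [Fin.ext_iff] at h; omega))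
      (hlt _ (fun h => by simp [Fin.ext_iff] at h))
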